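/- Let φ, ψ : S¹ → S¹ be continuous. For w ∈ 𝔻 define B_φ(w) = (1/2π)·∫₀^{2π} (φ(e^{ix}) − w)·φ(e^{ix})/(1 − w̄·φ(e^{ix}))² dx (this is the ∂̄-derivative ∂̄ξ_φ(w) of the average function), and similarly B_ψ(w). Then for every w ∈ 𝔻, one has |B_φ(w) − B_ψ(w)| ≤ ((2 − |w|)·(1 + |w|)²/(1 − |w|)⁴)·‖φ − ψ‖_{S¹}. -/

import Mathlib

/-- Arc-length distance on the unit circle: the infimum of `|x₁ − x₂|` over
representatives `ζ₁ = e^{ix₁}`, `ζ₂ = e^{ix₂}`. -/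
noncomputable def dS1 (ζ₁ ζ₂ : ℂ) : ℝ :=
  sInf {d : ℝ | ∃ x₁ x₂ : ℝ, ζ₁ = Complex.exp (Complex.I * (x₁ : ℂ)) ∧
    ζ₂ = Complex.exp (Complex.I * (x₂ : ℂ)) ∧ d = |x₁ - x₂|}

/-- `‖φ − ψ‖_{S¹} = sup_{ζ∈S¹} d_{S¹}(φ(ζ), ψ(ζ))`, the uniform arc-length
distance between two circle maps. -/
noncomputable def supDistS1 (φ ψ : ℂ → ℂ) : ℝ :=
  ⨆ ζ : {z : ℂ // ‖z‖ = 1}, dS1 (φ ζ.val) (ψ ζ.val)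

/-- The `∂̄`-derivative of the average function:
`∂̄ξ_φ(w) = (1/2π)·∫₀^{2π} (φ(e^{ix}) − w)·φ(e^{ix})/(1 − w̄·φ(e^{ix}))² dx`. -/
noncomputable def avgDerivBar (φ : ℂ → ℂ) (w : ℂ) : ℂ :=
  (1 / (2 * Real.pi)) • ∫ x in (0 : ℝ)..(2 * Real.pi),
    (φ (Complex.exp (Complex.I * (x : ℂ))) - w) * φ (Complex.exp (Complex.I * (x : ℂ))) /
      (1 - (starRingEnd ℂ) w * φ (Complex.exp (Complex.I * (x : ℂ)))) ^ 2

/-!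
The integrand of `∂̄ξ_φ(w)` is `F_w(φ(e^{ix}))` with `F_w(z) = (z − w) z / (1 − w̄ z)²`. On the
closed unit disk `F_w'(z) = ((2 − |w|²) z − w) / (1 − w̄ z)³` has modulus at most
`(2 − |w|)(1 + |w|) / (1 − |w|)³`, so `F_w` is Lipschitz there with this constant. Since the chordal
distance on the circle is dominated by the arc length, `|F_w(φ) − F_w(ψ)| ≤ C·‖φ − ψ‖_{S¹}`
pointwise, and averaging over the circle preserves this bound; the stated constant is larger by the
factor `(1 + |w|)/(1 − |w|) ≥ 1`.
-/

open ComplexConjugate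

lemma norm_exp_I_mul_sub_exp_I_mul_le (x₁ x₂ : ℝ) :
    ‖Complex.exp (Complex.I * x₁) - Complex.exp (Complex.I * x₂)‖ ≤ |x₁ - x₂| := by
  have h : Complex.exp (Complex.I * x₁) - Complex.exp (Complex.I * x₂) =
      Complex.exp (Complex.I * x₂) * (Complex.exp (Complex.I * ↑(x₁ - x₂)) - 1) := by
    rw [mul_sub, ← Complex.exp_add]
    push_cast
    ring_nf
  rw [h, norm_mul, Complex.norm_exp_I_mul_ofReal, one_mul]
  exact Real.norm_exp_I_mul_ofReal_sub_one_le

lemma exp_I_mul_arg {ζ : ℂ} (h : ‖ζ‖ = 1) : Complex.exp (Complex.I * ζ.arg) = ζ := by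
  simpa [h, mul_comm] using Complex.norm_mul_exp_arg_mul_I ζ

lemma dS1_nonneg (ζ₁ ζ₂ : ℂ) : 0 ≤ dS1 ζ₁ ζ₂ :=
  Real.sInf_nonneg <| by
    rintro d ⟨x₁, x₂, -, -, rfl⟩
    exact abs_nonneg _

lemma dS1_le_abs_sub {ζ₁ ζ₂ : ℂ} {x₁ x₂ : ℝ} (h₁ : ζ₁ = Complex.exp (Complex.I * x₁))
    (h₂ : ζ₂ = Complex.exp (Complex.I * x₂)) : dS1 ζ₁ ζ₂ ≤ |x₁ - x₂| :=
  csInf_le ⟨0, by rintro d ⟨x₁, x₂, -, -, rfl⟩; exact abs_nonneg _⟩ ⟨x₁, x₂, h₁, h₂, rfl⟩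

lemma dS1_le_two_pi {ζ₁ ζ₂ : ℂ} (h₁ : ‖ζ₁‖ = 1) (h₂ : ‖ζ₂‖ = 1) :
    dS1 ζ₁ ζ₂ ≤ 2 * Real.pi := by
  refine (dS1_le_abs_sub (exp_I_mul_arg h₁).symm (exp_I_mul_arg h₂).symm).trans ?_
  have := abs_le.mp (Complex.abs_arg_le_pi ζ₁)
  have := abs_le.mp (Complex.abs_arg_le_pi ζ₂)
  rw [abs_le]
  constructor <;> linarith

lemma norm_sub_le_dS1 {ζ₁ ζ₂ : ℂ} (h₁ : ‖ζ₁‖ = 1) (h₂ : ‖ζ₂‖ = 1) :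
    ‖ζ₁ - ζ₂‖ ≤ dS1 ζ₁ ζ₂ := by
  refine le_csInf ⟨_, ζ₁.arg, ζ₂.arg, (exp_I_mul_arg h₁).symm, (exp_I_mul_arg h₂).symm, rfl⟩ ?_
  rintro d ⟨x₁, x₂, rfl, rfl, rfl⟩
  exact norm_exp_I_mul_sub_exp_I_mul_le x₁ x₂

lemma supDistS1_nonneg (φ ψ : ℂ → ℂ) : 0 ≤ supDistS1 φ ψ :=
  Real.iSup_nonneg fun _ ↦ dS1_nonneg _ _

lemma norm_sub_le_supDistS1 {φ ψ : ℂ → ℂ} (hφ : ∀ ζ : ℂ, ‖ζ‖ = 1 → ‖φ ζ‖ = 1)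
    (hψ : ∀ ζ : ℂ, ‖ζ‖ = 1 → ‖ψ ζ‖ = 1) {ζ : ℂ} (hζ : ‖ζ‖ = 1) :
    ‖φ ζ - ψ ζ‖ ≤ supDistS1 φ ψ := by
  have hbdd : BddAbove (Set.range fun ζ : {z : ℂ // ‖z‖ = 1} ↦ dS1 (φ ζ) (ψ ζ)) := by
    refine ⟨2 * Real.pi, ?_⟩
    rintro _ ⟨ζ, rfl⟩
    exact dS1_le_two_pi (hφ _ ζ.2) (hψ _ ζ.2)
  exact (norm_sub_le_dS1 (hφ ζ hζ) (hψ ζ hζ)).trans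
    (le_ciSup (f := fun ζ : {z : ℂ // ‖z‖ = 1} ↦ dS1 (φ ζ) (ψ ζ)) hbdd ⟨ζ, hζ⟩)

section Kernel

noncomputable def dbarKernel (w z : ℂ) : ℂ :=
  (z - w) * z / (1 - conj w * z) ^ 2

variable {w z : ℂ}

lemma one_sub_norm_le_norm_one_sub_conj_mul (hz : ‖z‖ ≤ 1) :
    1 - ‖w‖ ≤ ‖1 - conj w * z‖ := by
  have h : ‖conj w * z‖ ≤ ‖w‖ := by
    rw [norm_mul, Complex.norm_conj]
    exact mul_le_of_le_one_right (norm_nonneg w) hz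
  have := norm_sub_norm_le (1 : ℂ) (conj w * z)
  rw [norm_one] at this
  linarith

lemma one_sub_conj_mul_ne_zero (hw : ‖w‖ < 1) (hz : ‖z‖ ≤ 1) : 1 - conj w * z ≠ 0 :=
  norm_pos_iff.mp <| (sub_pos.mpr hw).trans_le (one_sub_norm_le_norm_one_sub_conj_mul hz)

lemma hasDerivAt_dbarKernel (hz : 1 - conj w * z ≠ 0) :
    HasDerivAt (dbarKernel w) (((2 - conj w * w) * z - w) / (1 - conj w * z) ^ 3) z := by
  have hnum : HasDerivAt (fun z ↦ (z - w) * z) (1 * z + (z - w) * 1) z :=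
    ((hasDerivAt_id z).sub_const w).mul (hasDerivAt_id z)
  have hden : HasDerivAt (fun z ↦ 1 - conj w * z) (-conj w) z := by
    simpa using ((hasDerivAt_id z).const_mul (conj w)).const_sub 1
  refine (hnum.div (hden.pow 2) (pow_ne_zero 2 hz)).congr_deriv ?_
  simp only [Pi.pow_apply]
  rw [div_eq_div_iff (pow_ne_zero 2 (pow_ne_zero 2 hz)) (pow_ne_zero 3 hz)]
  ring

lemma norm_deriv_dbarKernel_le (hw : ‖w‖ < 1) (hz : ‖z‖ ≤ 1) :
    ‖((2 - conj w * w) * z - w) / (1 - conj w * z) ^ 3‖ ≤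
      (2 - ‖w‖) * (1 + ‖w‖) / (1 - ‖w‖) ^ 3 := by
  have hw0 := norm_nonneg w
  have hcoeff : ‖2 - conj w * w‖ = 2 - ‖w‖ ^ 2 := by
    rw [Complex.conj_mul', ← Complex.ofReal_pow, ← Complex.ofReal_ofNat, ← Complex.ofReal_sub,
      Complex.norm_real, Real.norm_of_nonneg (by nlinarith)]
  have hnum : ‖(2 - conj w * w) * z - w‖ ≤ (2 - ‖w‖) * (1 + ‖w‖) :=
    calc ‖(2 - conj w * w) * z - w‖ ≤ ‖2 - conj w * w‖ * ‖z‖ + ‖w‖ := by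
          rw [← norm_mul]; exact norm_sub_le _ _
      _ ≤ (2 - ‖w‖ ^ 2) * 1 + ‖w‖ := by
          rw [hcoeff]; gcongr; nlinarith
      _ = (2 - ‖w‖) * (1 + ‖w‖) := by ring
  have hden : (1 - ‖w‖) ^ 3 ≤ ‖(1 - conj w * z) ^ 3‖ := by
    rw [norm_pow]
    exact pow_le_pow_left₀ (by linarith) (one_sub_norm_le_norm_one_sub_conj_mul hz) 3
  rw [norm_div]
  exact div_le_div₀ (by nlinarith) hnum (pow_pos (by linarith) 3) hden

lemma norm_dbarKernel_sub_le (hw : ‖w‖ < 1) {a b : ℂ} (ha : ‖a‖ ≤ 1) (hb : ‖b‖ ≤ 1) :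
    ‖dbarKernel w a - dbarKernel w b‖ ≤
      (2 - ‖w‖) * (1 + ‖w‖) / (1 - ‖w‖) ^ 3 * ‖a - b‖ := by
  have hball : ∀ {z : ℂ}, z ∈ Metric.closedBall (0 : ℂ) 1 ↔ ‖z‖ ≤ 1 := by
    simp
  refine (convex_closedBall 0 1).norm_image_sub_le_of_norm_hasDerivWithin_le
    (fun z hz ↦ (hasDerivAt_dbarKernel
      (one_sub_conj_mul_ne_zero hw (hball.mp hz))).hasDerivWithinAt)
    (fun z hz ↦ norm_deriv_dbarKernel_le hw (hball.mp hz)) (hball.mpr hb) (hball.mpr ha)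

lemma Continuous.dbarKernel (hw : ‖w‖ < 1) {u : ℝ → ℂ} (hu : Continuous u)
    (hu1 : ∀ x, ‖u x‖ ≤ 1) : Continuous fun x ↦ dbarKernel w (u x) :=
  ((hu.sub continuous_const).mul hu).div ((continuous_const.sub (continuous_const.mul hu)).pow 2)
    fun x ↦ pow_ne_zero 2 (one_sub_conj_mul_ne_zero hw (hu1 x))

end Kernel

lemma norm_smul_integral_sub_smul_integral_le {E : Type*} [NormedAddCommGroup E]
    [NormedSpace ℝ E] {f g : ℝ → E} {T C : ℝ} (hT : 0 < T)
    (hf : IntervalIntegrable f MeasureTheory.volume 0 T)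
    (hg : IntervalIntegrable g MeasureTheory.volume 0 T)
    (hfg : ∀ x ∈ Set.uIoc 0 T, ‖f x - g x‖ ≤ C) :
    ‖(1 / T) • (∫ x in (0 : ℝ)..T, f x) - (1 / T) • ∫ x in (0 : ℝ)..T, g x‖ ≤ C := by
  rw [← smul_sub, ← intervalIntegral.integral_sub hf hg, norm_smul, Real.norm_of_nonneg
    (by positivity)]
  calc 1 / T * ‖∫ x in (0 : ℝ)..T, f x - g x‖ ≤ 1 / T * (C * |T - 0|) := by
        gcongr
        exact intervalIntegral.norm_integral_le_of_norm_le_const hfg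
    _ = C := by
        rw [sub_zero, abs_of_pos hT]
        field_simp

lemma ContinuousOn.comp_exp_I_mul {φ : ℂ → ℂ} (hφ : ContinuousOn φ {z : ℂ | ‖z‖ = 1}) :
    Continuous fun x : ℝ ↦ φ (Complex.exp (Complex.I * x)) :=
  hφ.comp_continuous (by fun_prop) fun x ↦ Complex.norm_exp_I_mul_ofReal x

theorem norm_avgDerivBar_sub_le {φ ψ : ℂ → ℂ}
    (hcontφ : ContinuousOn φ {z : ℂ | ‖z‖ = 1}) (hcontψ : ContinuousOn ψ {z : ℂ | ‖z‖ = 1})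
    (hmapsφ : ∀ ζ : ℂ, ‖ζ‖ = 1 → ‖φ ζ‖ = 1) (hmapsψ : ∀ ζ : ℂ, ‖ζ‖ = 1 → ‖ψ ζ‖ = 1)
    {w : ℂ} (hw : ‖w‖ < 1) :
    ‖avgDerivBar φ w - avgDerivBar ψ w‖ ≤
      (2 - ‖w‖) * (1 + ‖w‖) / (1 - ‖w‖) ^ 3 * supDistS1 φ ψ := by
  have hφ1 (x : ℝ) := hmapsφ _ (Complex.norm_exp_I_mul_ofReal x)
  have hψ1 (x : ℝ) := hmapsψ _ (Complex.norm_exp_I_mul_ofReal x)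
  refine norm_smul_integral_sub_smul_integral_le Real.two_pi_pos
    ((hcontφ.comp_exp_I_mul.dbarKernel hw (hφ1 · |>.le)).intervalIntegrable _ _)
    ((hcontψ.comp_exp_I_mul.dbarKernel hw (hψ1 · |>.le)).intervalIntegrable _ _)
    fun x _ ↦ ?_
  refine (norm_dbarKernel_sub_le hw (hφ1 x).le (hψ1 x).le).trans ?_
  gcongr
  · exact div_nonneg (by nlinarith [norm_nonneg w]) (pow_nonneg (by linarith) 3)
  · exact norm_sub_le_supDistS1 hmapsφ hmapsψ (Complex.norm_exp_I_mul_ofReal x)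

/-- For continuous `φ, ψ : S¹ → S¹` and every `w ∈ 𝔻`,
`|∂̄ξ_φ(w) − ∂̄ξ_ψ(w)| ≤ ((2 − |w|)(1 + |w|)²/(1 − |w|)⁴)·‖φ − ψ‖_{S¹}`. -/
theorem stmt_11 (φ ψ : ℂ → ℂ)
    (hcontφ : ContinuousOn φ {z : ℂ | ‖z‖ = 1})
    (hcontψ : ContinuousOn ψ {z : ℂ | ‖z‖ = 1})
    (hmapsφ : ∀ ζ : ℂ, ‖ζ‖ = 1 → ‖φ ζ‖ = 1)
    (hmapsψ : ∀ ζ : ℂ, ‖ζ‖ = 1 → ‖ψ ζ‖ = 1) :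
    ∀ w : ℂ, ‖w‖ < 1 →
      ‖avgDerivBar φ w - avgDerivBar ψ w‖ ≤
        ((2 - ‖w‖) * (1 + ‖w‖) ^ 2 / (1 - ‖w‖) ^ 4) *
          supDistS1 φ ψ := by
  intro w hw
  have hw0 := norm_nonneg w
  have hconst : (2 - ‖w‖) * (1 + ‖w‖) / (1 - ‖w‖) ^ 3 ≤
      (2 - ‖w‖) * (1 + ‖w‖) ^ 2 / (1 - ‖w‖) ^ 4 := by
    rw [div_le_div_iff₀ (pow_pos (by linarith) 3) (pow_pos (by linarith) 4)]
    have : 0 ≤ (2 - ‖w‖) * (1 + ‖w‖) * (1 - ‖w‖) ^ 3 :=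
      mul_nonneg (mul_nonneg (by linarith) (by linarith)) (pow_nonneg (by linarith) 3)
    nlinarith
  exact (norm_avgDerivBar_sub_le hcontφ hcontψ hmapsφ hmapsψ hw).trans
    (mul_le_mul_of_nonneg_right hconst (supDistS1_nonneg φ ψ))
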